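/- For every natural number n and every real number z, the polynomial \mathcal{T}_n is related to the upper incomplete Gamma function by \mathcal{T}_n(z) = e^{z+n} \, \Gamma(n+1, z+n), i.e. \mathcal{T}_n(z) = e^{z+n} \int_{z+n}^{\infty} t^{n} e^{-t} \, dt. -/

import Mathlib

open Finset Real

/-- The real polynomial `𝒯 n z = ∑_{m=0}^{n} C(n,m) m^m (n-m+z)^(n-m)` (with `0^0 = 1`). -/
noncomputable def calT (n : ℕ) (z : ℝ) : ℝ :=
  ∑ m ∈ Finset.range (n + 1),
    (n.choose m : ℝ) * (m : ℝ) ^ m * (((n - m : ℕ) : ℝ) + z) ^ (n - m)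

/-!
Both sides equal `n! ∑_{k ≤ n} (z + n)^k / k!`. On the integral side, `-e^{-t}` times
`n! ∑_{k ≤ n} t^k / k!` is an antiderivative of `t^n e^{-t}` vanishing at infinity. On the
polynomial side, `𝒯_{n+1}' (z) = (n+1) 𝒯_n (z+1)`, a recursion the partial sum obeys as well,
and at `z = -n` both equal `n!`: for `𝒯_n` this is the `n`-th forward difference of `x ↦ x^n`.
-/

open Nat MeasureTheory Set Filter Topology

lemma eq_of_hasDerivAt_eq {𝕜 G : Type*} [NontriviallyNormedField 𝕜] [IsRCLikeNormedField 𝕜]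
    [NormedAddCommGroup G] [NormedSpace 𝕜 G] {f g f' : 𝕜 → G}
    (hf : ∀ x, HasDerivAt f (f' x) x) (hg : ∀ x, HasDerivAt g (f' x) x) (a : 𝕜)
    (hfg : f a = g a) : f = g :=
  eq_of_fderiv_eq (fun x => (hf x).differentiableAt) (fun x => (hg x).differentiableAt)
    (fun x => (hf x).hasFDerivAt.fderiv.trans (hg x).hasFDerivAt.fderiv.symm) a hfg

noncomputable def scaledExpPartialSum (n : ℕ) (x : ℝ) : ℝ :=
  ∑ k ∈ range (n + 1), (n ! / k ! : ℝ) * x ^ k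

namespace scaledExpPartialSum

@[simp]
lemma zero_left (x : ℝ) : scaledExpPartialSum 0 x = 1 := by
  simp [scaledExpPartialSum]

@[simp]
lemma zero_right (n : ℕ) : scaledExpPartialSum n 0 = n ! := by
  rw [scaledExpPartialSum, sum_eq_single_of_mem 0 (by simp) fun k _ hk => by simp [hk]]
  simp

lemma succ (n : ℕ) (x : ℝ) :
    scaledExpPartialSum (n + 1) x = (n + 1) * scaledExpPartialSum n x + x ^ (n + 1) := by
  rw [scaledExpPartialSum, sum_range_succ, scaledExpPartialSum, mul_sum]
  congr 1
  · refine sum_congr rfl fun k _ => ?_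
    push_cast [factorial_succ]
    ring
  · simp [(factorial_pos (n + 1)).ne']

lemma hasDerivAt (n : ℕ) (x : ℝ) :
    HasDerivAt (scaledExpPartialSum n) (scaledExpPartialSum n x - x ^ n) x := by
  induction n with
  | zero =>
    rw [show scaledExpPartialSum 0 = fun _ => 1 from funext zero_left]
    simpa using hasDerivAt_const x (1 : ℝ)
  | succ n ih =>
    rw [show scaledExpPartialSum (n + 1) = fun y => (n + 1) * scaledExpPartialSum n y + y ^ (n + 1)
      from funext (succ n)]
    refine ((ih.const_mul ((n : ℝ) + 1)).add (hasDerivAt_pow (n + 1) x)).congr_deriv ?_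
    push_cast
    ring

lemma hasDerivAt_succ (n : ℕ) (x : ℝ) :
    HasDerivAt (scaledExpPartialSum (n + 1)) ((n + 1) * scaledExpPartialSum n x) x := by
  simpa [succ] using hasDerivAt (n + 1) x

end scaledExpPartialSum

lemma integrableOn_Ioi_pow_mul_exp_neg (n : ℕ) (a : ℝ) :
    IntegrableOn (fun t : ℝ => t ^ n * exp (-t)) (Ioi a) :=
  integrable_of_isBigO_exp_neg one_half_pos (by fun_prop) <| by
    simpa [mul_comm] using (Gamma_integrand_isLittleO n).isBigO

lemma integral_Ioi_pow_mul_exp_neg (n : ℕ) (a : ℝ) :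
    ∫ t in Ioi a, t ^ n * exp (-t) = exp (-a) * scaledExpPartialSum n a := by
  have hderiv (t : ℝ) :
      HasDerivAt (fun t => -(exp (-t) * scaledExpPartialSum n t)) (t ^ n * exp (-t)) t := by
    refine ((hasDerivAt_neg t).exp.mul (scaledExpPartialSum.hasDerivAt n t)).neg.congr_deriv ?_
    ring
  have hlim : Tendsto (fun t => -(exp (-t) * scaledExpPartialSum n t)) atTop (𝓝 0) := by
    have h : Tendsto (fun t => ∑ k ∈ range (n + 1), (n ! / k ! : ℝ) * (t ^ k * exp (-t)))
        atTop (𝓝 0) := by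
      simpa using tendsto_finsetSum (range (n + 1)) fun k _ =>
        (tendsto_pow_mul_exp_neg_atTop_nhds_zero k).const_mul (n ! / k ! : ℝ)
    convert h.neg using 2 with t
    · simp only [scaledExpPartialSum, mul_sum, neg_inj]
      exact sum_congr rfl fun k _ => by ring
    · simp
  rw [integral_Ioi_of_hasDerivAt_of_tendsto' (fun t _ => hderiv t)
    (integrableOn_Ioi_pow_mul_exp_neg n a) hlim]
  ring

lemma calT_neg_natCast (n : ℕ) : calT n (-n) = n ! := by
  have h := fwdDiff_iter_eq_sum_shift (1 : ℝ) (fun x : ℝ => x ^ n) n 0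
  rw [fwdDiff_iter_eq_factorial, Pi.natCast_apply] at h
  rw [calT, h]
  refine sum_congr rfl fun m hm => ?_
  have hm : m ≤ n := Nat.lt_succ_iff.mp (mem_range.mp hm)
  rw [Nat.cast_sub hm, show (n : ℝ) - m + -n = -m by ring, neg_pow]
  simp only [zsmul_eq_mul, Int.cast_mul, Int.cast_pow, Int.cast_neg, Int.cast_one,
    Int.cast_natCast, zero_add, nsmul_eq_mul, mul_one]
  rw [show (m : ℝ) ^ n = m ^ m * m ^ (n - m) by rw [← pow_add, Nat.add_sub_cancel' hm]]
  ring

lemma hasDerivAt_calT_succ (n : ℕ) (z : ℝ) :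
    HasDerivAt (calT (n + 1)) ((n + 1) * calT n (z + 1)) z := by
  have h : HasDerivAt (calT (n + 1)) (∑ m ∈ range (n + 2), ((n + 1).choose m : ℝ) * m ^ m *
      ((n + 1 - m : ℕ) * (((n + 1 - m : ℕ) : ℝ) + z) ^ (n + 1 - m - 1))) z :=
    HasDerivAt.fun_sum fun m _ => by
      simpa using (((hasDerivAt_id z).const_add (((n + 1 - m : ℕ) : ℝ))).pow (n + 1 - m)).const_mul
        (((n + 1).choose m : ℝ) * (m : ℝ) ^ m)
  refine h.congr_deriv ?_
  rw [sum_range_succ, calT, mul_sum]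
  simp only [Nat.sub_self, CharP.cast_eq_zero, zero_mul, mul_zero, add_zero]
  refine sum_congr rfl fun m hm => ?_
  have hm : m ≤ n := Nat.lt_succ_iff.mp (mem_range.mp hm)
  have hchoose : ((n + 1).choose m : ℝ) * ((n + 1 - m : ℕ) : ℝ) = (n + 1) * n.choose m := by
    rw [mul_comm (_ + 1 : ℝ)]
    exact_mod_cast (Nat.choose_mul_succ_eq n m).symm
  have hbase : ((n + 1 - m : ℕ) : ℝ) + z = ((n - m : ℕ) : ℝ) + (z + 1) := by
    rw [show n + 1 - m = n - m + 1 by omega]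
    push_cast
    ring
  rw [show n + 1 - m - 1 = n - m by omega, hbase]
  linear_combination ((m : ℝ) ^ m * (((n - m : ℕ) : ℝ) + (z + 1)) ^ (n - m)) * hchoose

lemma calT_eq_scaledExpPartialSum (n : ℕ) (z : ℝ) :
    calT n z = scaledExpPartialSum n (z + n) := by
  induction n generalizing z with
  | zero => simp [calT]
  | succ n ih =>
    have hderiv (w : ℝ) : HasDerivAt (fun w => scaledExpPartialSum (n + 1) (w + (n + 1 : ℕ)))
        ((n + 1) * calT n (w + 1)) w := by
      refine ((scaledExpPartialSum.hasDerivAt_succ n _).comp_add_const w _).congr_deriv ?_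
      rw [ih]
      push_cast
      ring_nf
    refine congrFun (eq_of_hasDerivAt_eq (hasDerivAt_calT_succ n) hderiv (-(n + 1 : ℕ)) ?_) z
    rw [calT_neg_natCast, neg_add_cancel, scaledExpPartialSum.zero_right]

theorem calT_eq_incomplete_gamma (n : ℕ) (z : ℝ) :
    calT n z = Real.exp (z + n) * ∫ t in Set.Ioi (z + n), t ^ n * Real.exp (-t) := by
  rw [integral_Ioi_pow_mul_exp_neg, ← mul_assoc, ← exp_add, add_neg_cancel, exp_zero, one_mul,
    calT_eq_scaledExpPartialSum]
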